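/- arXiv:1807.06796 — 2 statements merged into one kernel-verified Lean document; each statement's English description precedes it below -/
import Mathlib

section
/- Let p ≥ 1 and let a ≤ b ≤ c ≤ d be real numbers. Then (d−b)^p + (c−a)^p ≤ (d−a)^p + (c−b)^p. -/
open Real

lemma stmt_2_aux (p s : ℝ) (hp : 1 ≤ p) (hs : 0 ≤ s) :
    MonotoneOn (fun t : ℝ => (t + s) ^ p - t ^ p) (Set.Ici 0) := by
  have hp0 : 0 ≤ p := le_trans zero_le_one hp
  apply monotoneOn_of_deriv_nonneg (convex_Ici 0)
  · apply Continuous.continuousOn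
    exact ((continuous_id.add continuous_const).rpow_const (fun t => Or.inr hp0)).sub (continuous_id.rpow_const (fun t => Or.inr hp0))
  · intro t ht
    have h1 : HasDerivAt (fun t : ℝ => (t + s) ^ p - t ^ p)
        (p * (t + s) ^ (p - 1) * 1 - p * t ^ (p - 1)) t := by
      exact ((Real.hasDerivAt_rpow_const (Or.inr hp)).comp t
        ((hasDerivAt_id t).add_const s)).sub (Real.hasDerivAt_rpow_const (Or.inr hp))
    exact h1.differentiableAt.differentiableWithinAt
  · intro t ht
    rw [interior_Ici] at ht
    have h1 : HasDerivAt (fun t : ℝ => (t + s) ^ p - t ^ p)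
        (p * (t + s) ^ (p - 1) * 1 - p * t ^ (p - 1)) t := by
      exact ((Real.hasDerivAt_rpow_const (Or.inr hp)).comp t
        ((hasDerivAt_id t).add_const s)).sub (Real.hasDerivAt_rpow_const (Or.inr hp))
    rw [h1.deriv]
    have ht0 : (0:ℝ) ≤ t := le_of_lt ht
    have : t ^ (p - 1) ≤ (t + s) ^ (p - 1) :=
      Real.rpow_le_rpow ht0 (by linarith) (by linarith)
    nlinarith

/-- For `p ≥ 1` and reals `a ≤ b ≤ c ≤ d`,
`(d−b)^p + (c−a)^p ≤ (d−a)^p + (c−b)^p`. -/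
theorem stmt_2 (p a b c d : ℝ) (hp : 1 ≤ p)
    (hab : a ≤ b) (hbc : b ≤ c) (hcd : c ≤ d) :
    (d - b) ^ p + (c - a) ^ p ≤ (d - a) ^ p + (c - b) ^ p := by
  have h := stmt_2_aux p (b - a) hp (by linarith)
    (Set.mem_Ici.mpr (by linarith : (0:ℝ) ≤ c - b))
    (Set.mem_Ici.mpr (by linarith : (0:ℝ) ≤ d - b)) (by linarith)
  simp only at h
  have e1 : c - b + (b - a) = c - a := by ring
  have e2 : d - b + (b - a) = d - a := by ring
  rw [e1, e2] at h
  linarith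
end

section
/- Let F and G be distribution functions on ℝ with finite 2p-th moments, p > 1. Then the function t ↦ c_p(t;F,G) = ∫_{F^{-1}(1/2)}^{F^{-1}(t)} h_p'(s − G^{-1}(F(s))) ds belongs to L^2(0,1). -/
open Real MeasureTheory Set
open scoped ENNReal

/-- Generalized inverse (quantile function) of a distribution function. -/
noncomputable def qf (F : ℝ → ℝ) (t : ℝ) : ℝ := sInf {x : ℝ | t ≤ F x}

/-- The function `c_p(t;F,G) = ∫_{F⁻¹(1/2)}^{F⁻¹(t)} h_p'(s − G⁻¹(F(s))) ds`
with `h_p'(x) = p·sgn(x)·|x|^{p-1}`. -/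
noncomputable def cp (p : ℝ) (F G : ℝ → ℝ) (t : ℝ) : ℝ :=
  ∫ s in (qf F (1 / 2))..(qf F t),
    p * Real.sign (s - qf G (F s)) * |s - qf G (F s)| ^ (p - 1)

/-!
For `s` between `F⁻¹(1/2)` and `F⁻¹(t)` the level `F s` lies between `1/2` and `t`, so by
monotonicity of quantile functions `|G⁻¹(F s)| ≤ |G⁻¹(1/2)| + |G⁻¹(t)|`. The integrand is then at
most `p (|F⁻¹(t)| + |G⁻¹(t)| + C)^(p-1)` on an interval of length at most `|F⁻¹(t)| + C`, so
`|c_p(t)| ≤ K + p (|F⁻¹(t)| + |G⁻¹(t)| + K)^p`, which lies in `L²` by the `2p`-th moment bounds.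

Since `F` and `G` are arbitrary monotone functions, `qf H u` takes the junk value `0` at levels `u`
where `{x | u ≤ H x}` is empty or unbounded below, and `1/2` may be such a level. So `1/2` is
replaced by a level `v` of the same kind as `t` for `G` (`qfRegion`), chosen among finitely many
representatives; the part of the integral between `F⁻¹(1/2)` and `F⁻¹(v)` is bounded by the finite
integral of the absolute value of the integrand there.
-/

lemma exists_bounded_representatives {α β : Type*} [Nonempty α] [Finite β] (f : α → β)
    (φ : α → ℝ) (S : Set α) : ∃ K, ∀ t ∈ S, ∃ v ∈ S, f v = f t ∧ φ v ≤ K := by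
  obtain ⟨K, hK⟩ := (Set.finite_range fun b => φ (Function.invFunOn f S b)).bddAbove
  refine ⟨K, fun t ht => ?_⟩
  obtain ⟨hvS, hv⟩ := Function.invFunOn_pos ⟨t, ht, rfl⟩
  exact ⟨_, hvS, hv, hK ⟨f t, rfl⟩⟩

section IntervalIntegral

variable {E : Type*} [NormedAddCommGroup E] [NormedSpace ℝ E] {g : ℝ → E}

theorem norm_intervalIntegral_le_lintegral_add {a b z C : ℝ} (hC : 0 ≤ C)
    (hb : ∫⁻ s in uIcc a b, ‖g s‖ₑ ≠ ∞)
    (hg : ∀ s ∈ Ioo (min a z) (max a z), s ∉ uIcc a b → ‖g s‖ ≤ C) :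
    ‖∫ s in a..z, g s‖ ≤ (∫⁻ s in uIcc a b, ‖g s‖ₑ).toReal + C * |z - a| := by
  set I := Ioo (min a z) (max a z)
  have hfar : ∫⁻ s in I \ uIcc a b, ‖g s‖ₑ ≤ ENNReal.ofReal (C * |z - a|) :=
    calc ∫⁻ s in I \ uIcc a b, ‖g s‖ₑ ≤ ∫⁻ _ in I \ uIcc a b, ENNReal.ofReal C :=
          setLIntegral_mono' (measurableSet_Ioo.diff measurableSet_uIcc) fun s hs => by
            rw [← ofReal_norm]; exact ENNReal.ofReal_le_ofReal (hg s hs.1 hs.2)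
      _ ≤ ENNReal.ofReal C * volume I := by
          rw [setLIntegral_const]; gcongr; exact sdiff_subset
      _ = ENNReal.ofReal (C * |z - a|) := by
          rw [Real.volume_Ioo, max_sub_min_eq_abs, ENNReal.ofReal_mul hC]
  have hlint :
      ∫⁻ s in uIoc a z, ‖g s‖ₑ ≤ (∫⁻ s in uIcc a b, ‖g s‖ₑ) + ENNReal.ofReal (C * |z - a|) :=
    calc ∫⁻ s in uIoc a z, ‖g s‖ₑ = ∫⁻ s in I, ‖g s‖ₑ := setLIntegral_congr Ioo_ae_eq_Ioc.symm
      _ ≤ ∫⁻ s in uIcc a b ∪ (I \ uIcc a b), ‖g s‖ₑ :=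
          lintegral_mono_set (by rw [union_sdiff_self]; exact subset_union_right)
      _ ≤ _ := (lintegral_union_le _ _ _).trans (add_le_add_right hfar _)
  calc ‖∫ s in a..z, g s‖ = ‖∫ s in uIoc a z, g s‖ :=
        intervalIntegral.norm_intervalIntegral_eq _ _ _ _
    _ ≤ (∫⁻ s in uIoc a z, ‖g s‖ₑ).toReal := by
        simpa only [ofReal_norm] using norm_integral_le_lintegral_norm g
    _ ≤ ((∫⁻ s in uIcc a b, ‖g s‖ₑ) + ENNReal.ofReal (C * |z - a|)).toReal :=
        ENNReal.toReal_mono (ENNReal.add_ne_top.2 ⟨hb, ENNReal.ofReal_ne_top⟩) hlint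
    _ = _ := by
        rw [ENNReal.toReal_add hb ENNReal.ofReal_ne_top, ENNReal.toReal_ofReal (by positivity)]

theorem stronglyMeasurable_intervalIntegral_right (hg : StronglyMeasurable g) (a : ℝ) :
    StronglyMeasurable fun b => ∫ s in a..b, g s := by
  have hIoc : ∀ l u : ℝ → ℝ, Measurable l → Measurable u →
      StronglyMeasurable fun b => ∫ s in Ioc (l b) (u b), g s := by
    intro l u hl hu
    have hset : MeasurableSet {q : ℝ × ℝ | q.2 ∈ Ioc (l q.1) (u q.1)} :=
      (measurableSet_lt (hl.comp measurable_fst) measurable_snd).inter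
        (measurableSet_le measurable_snd (hu.comp measurable_fst))
    have := ((hg.comp_measurable measurable_snd).indicator hset).integral_prod_right'
      (ν := volume)
    simp_rw [← integral_indicator measurableSet_Ioc]
    exact this
  exact (hIoc _ _ measurable_const measurable_id).sub (hIoc _ _ measurable_id measurable_const)

end IntervalIntegral

section Quantile

variable {H : ℝ → ℝ} {s t u v w : ℝ}

def qfDomain (H : ℝ → ℝ) : Set ℝ := {u | (H ⁻¹' Ici u).Nonempty ∧ BddBelow (H ⁻¹' Ici u)}

def qfRegion (H : ℝ → ℝ) (u : ℝ) : Prop × Prop :=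
  ((H ⁻¹' Ici u).Nonempty, BddBelow (H ⁻¹' Ici u))

lemma qf_eq_zero_of_notMem_qfDomain (hu : u ∉ qfDomain H) : qf H u = 0 := by
  by_cases hne : (H ⁻¹' Ici u).Nonempty
  · exact Real.sInf_of_not_bddBelow fun hbdd => hu ⟨hne, hbdd⟩
  · rw [not_nonempty_iff_eq_empty] at hne
    exact (congrArg sInf hne).trans Real.sInf_empty

lemma qf_le_qf (huv : u ≤ v) (hu : BddBelow (H ⁻¹' Ici u)) (hv : (H ⁻¹' Ici v).Nonempty) :
    qf H u ≤ qf H v :=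
  csInf_le_csInf hu hv (preimage_mono (Ici_subset_Ici.2 huv))

lemma le_apply_of_qf_lt (hH : Monotone H) (ht : (H ⁻¹' Ici t).Nonempty) (hs : qf H t < s) :
    t ≤ H s := by
  obtain ⟨x, hx, hxs⟩ := exists_lt_of_csInf_lt ht hs
  exact le_trans hx (hH hxs.le)

lemma apply_lt_of_lt_qf (ht : BddBelow (H ⁻¹' Ici t)) (hs : s < qf H t) : H s < t := by
  by_contra! h
  exact (csInf_le ht h).not_gt hs

lemma ordConnected_qfDomain (H : ℝ → ℝ) : (qfDomain H).OrdConnected :=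
  ⟨fun _ hu _ hw _ hv => ⟨hw.1.mono (preimage_mono (Ici_subset_Ici.2 hv.2)),
    hu.2.mono (preimage_mono (Ici_subset_Ici.2 hv.1))⟩⟩

theorem measurable_qf (H : ℝ → ℝ) : Measurable (qf H) := by
  refine measurable_of_restrict_of_restrict_compl (ordConnected_qfDomain H).measurableSet ?_ ?_
  · exact Monotone.measurable fun u v huv => qf_le_qf huv u.2.2 v.2.1
  · rw [show (qfDomain H)ᶜ.domRestrict (qf H) = fun _ => 0 from
      funext fun u => qf_eq_zero_of_notMem_qfDomain u.2]
    exact measurable_const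

lemma abs_qf_le_of_mem_uIcc (hu : u ∈ uIcc v w) (hvw : qfRegion H v = qfRegion H w) :
    |qf H u| ≤ |qf H v| + |qf H w| := by
  wlog hle : v ≤ w generalizing v w
  · rw [add_comm]; exact this (uIcc_comm v w ▸ hu) hvw.symm (le_of_not_ge hle)
  rw [uIcc_of_le hle] at hu
  simp only [qfRegion, Prod.mk.injEq, eq_iff_iff] at hvw
  by_cases hne : (H ⁻¹' Ici v).Nonempty
  swap
  · rw [qf_eq_zero_of_notMem_qfDomain fun h =>
      hne (h.1.mono (preimage_mono (Ici_subset_Ici.2 hu.1))), abs_zero]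
    positivity
  by_cases hbdd : BddBelow (H ⁻¹' Ici w)
  swap
  · rw [qf_eq_zero_of_notMem_qfDomain fun h =>
      hbdd (h.2.mono (preimage_mono (Ici_subset_Ici.2 hu.2))), abs_zero]
    positivity
  have hwne := hvw.1.1 hne
  have hvbdd := hvw.2.2 hbdd
  have h₁ : qf H v ≤ qf H u :=
    qf_le_qf hu.1 hvbdd (hwne.mono (preimage_mono (Ici_subset_Ici.2 hu.2)))
  have h₂ : qf H u ≤ qf H w :=
    qf_le_qf hu.2 (hvbdd.mono (preimage_mono (Ici_subset_Ici.2 hu.1))) hwne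
  exact (abs_le_max_abs_abs h₁ h₂).trans (max_le_add_of_nonneg (abs_nonneg _) (abs_nonneg _))

lemma apply_mem_uIcc_of_mem_Ioo (hH : Monotone H) (ht : t ∈ qfDomain H) (hv : v ∈ qfDomain H)
    (hs : s ∈ Ioo (min (qf H t) (qf H v)) (max (qf H t) (qf H v))) : H s ∈ uIcc t v := by
  rcases le_total (qf H t) (qf H v) with h | h
  · rw [min_eq_left h, max_eq_right h] at hs
    exact mem_uIcc.2 (Or.inl ⟨le_apply_of_qf_lt hH ht.1 hs.1, (apply_lt_of_lt_qf hv.2 hs.2).le⟩)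
  · rw [min_eq_right h, max_eq_left h] at hs
    exact mem_uIcc.2 (Or.inr ⟨le_apply_of_qf_lt hH hv.1 hs.1, (apply_lt_of_lt_qf ht.2 hs.2).le⟩)

end Quantile

section Cp

variable {p : ℝ} {F G : ℝ → ℝ} {t v : ℝ}

noncomputable def derivAbsRpow (p x : ℝ) : ℝ := p * Real.sign x * |x| ^ (p - 1)

lemma abs_derivAbsRpow_le (hp : 0 ≤ p) (x : ℝ) : |derivAbsRpow p x| ≤ p * |x| ^ (p - 1) := by
  have hsign : |Real.sign x| ≤ 1 := by rcases Real.sign_apply_eq x with h | h | h <;> simp [h]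
  rw [derivAbsRpow, abs_mul, abs_mul, abs_of_nonneg hp,
    abs_of_nonneg (rpow_nonneg (abs_nonneg x) _)]
  calc p * |Real.sign x| * |x| ^ (p - 1) ≤ p * 1 * |x| ^ (p - 1) := by gcongr
    _ = p * |x| ^ (p - 1) := by rw [mul_one]

lemma measurable_derivAbsRpow (p : ℝ) : Measurable (derivAbsRpow p) := by
  have hsign : Measurable Real.sign := by
    unfold Real.sign
    exact Measurable.ite measurableSet_Iio measurable_const
      (Measurable.ite measurableSet_Ioi measurable_const measurable_const)
  unfold derivAbsRpow
  fun_prop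

noncomputable def cpIntegrand (p : ℝ) (F G : ℝ → ℝ) (s : ℝ) : ℝ :=
  derivAbsRpow p (s - qf G (F s))

lemma cp_eq_intervalIntegral (p : ℝ) (F G : ℝ → ℝ) (t : ℝ) :
    cp p F G t = ∫ s in qf F (1 / 2)..qf F t, cpIntegrand p F G s := rfl

theorem measurable_cp (hF : Monotone F) : Measurable (cp p F G) := by
  have hg : Measurable (cpIntegrand p F G) :=
    (measurable_derivAbsRpow p).comp (measurable_id.sub ((measurable_qf G).comp hF.measurable))
  exact ((stronglyMeasurable_intervalIntegral_right hg.stronglyMeasurable _).comp_measurable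
    (measurable_qf F)).measurable

lemma mem_Ioo_of_notMem_uIcc {a b z s : ℝ} (hs : s ∈ Ioo (min a z) (max a z))
    (hsb : s ∉ uIcc a b) : s ∈ Ioo (min z b) (max z b) := by
  simp only [mem_Ioo, mem_uIcc, min_lt_iff, lt_max_iff] at *
  grind

theorem abs_cp_le_of_qfRegion_eq (hp : 1 ≤ p) (hF : Monotone F) (ht : t ∈ qfDomain F)
    (hv : v ∈ qfDomain F) (hreg : qfRegion G t = qfRegion G v)
    (hκ : ∫⁻ s in uIcc (qf F (1 / 2)) (qf F v), ‖cpIntegrand p F G s‖ₑ ≠ ∞) :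
    |cp p F G t| ≤ (∫⁻ s in uIcc (qf F (1 / 2)) (qf F v), ‖cpIntegrand p F G s‖ₑ).toReal
      + p * (|qf F (1 / 2)| + |qf F t| + |qf G t| + |qf G v|) ^ (p - 1)
        * |qf F t - qf F (1 / 2)| := by
  set a := qf F (1 / 2)
  set z := qf F t
  refine norm_intervalIntegral_le_lintegral_add (by positivity) hκ fun s hs hsb => ?_
  have hqG : |qf G (F s)| ≤ |qf G t| + |qf G v| :=
    abs_qf_le_of_mem_uIcc
      (apply_mem_uIcc_of_mem_Ioo hF ht hv (mem_Ioo_of_notMem_uIcc hs hsb)) hreg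
  have hmin : -(|a| + |z|) ≤ min a z := le_min (by linarith [neg_abs_le a, abs_nonneg z])
    (by linarith [neg_abs_le z, abs_nonneg a])
  have hmax : max a z ≤ |a| + |z| := max_le (by linarith [le_abs_self a, abs_nonneg z])
    (by linarith [le_abs_self z, abs_nonneg a])
  have habs : |s| ≤ |a| + |z| := abs_le.2 ⟨by linarith [hs.1], by linarith [hs.2]⟩
  calc ‖cpIntegrand p F G s‖ ≤ p * |s - qf G (F s)| ^ (p - 1) :=
        abs_derivAbsRpow_le (by linarith) _
    _ ≤ p * (|a| + |z| + |qf G t| + |qf G v|) ^ (p - 1) := by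
        gcongr
        linarith [abs_sub s (qf G (F s))]

theorem exists_abs_cp_le (hp : 1 ≤ p) (hF : Monotone F) :
    ∃ K, 0 ≤ K ∧ ∀ t, |cp p F G t| ≤ K + p * (|qf F t| + |qf G t| + K) ^ p := by
  set a := qf F (1 / 2)
  set κ : ℝ → ℝ≥0∞ := fun v => ∫⁻ s in uIcc a (qf F v), ‖cpIntegrand p F G s‖ₑ
  obtain ⟨K₀, hK₀⟩ := exists_bounded_representatives (qfRegion G)
    (fun v => (κ v).toReal + |qf G v|) {v | v ∈ qfDomain F ∧ κ v ≠ ∞}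
  set K := |a| + |∫ s in a..0, cpIntegrand p F G s| + max K₀ 0 with hKdef
  have hK : 0 ≤ K := by positivity
  refine ⟨K, hK, fun t => ?_⟩
  set B := |qf F t| + |qf G t| + K with hBdef
  have hB : 0 ≤ B := by positivity
  have hpB : 0 ≤ p * B ^ p := by positivity
  by_cases htF : t ∈ qfDomain F
  swap
  · rw [cp_eq_intervalIntegral, qf_eq_zero_of_notMem_qfDomain htF]
    linarith [abs_nonneg a, le_max_right K₀ 0]
  by_cases hκt : κ t = ∞
  -- the interval integral then takes its junk value `0`
  · rw [cp_eq_intervalIntegral, intervalIntegral.integral_undef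
      fun h => ((intervalIntegrable_iff' enorm_ne_top).1 h).2.ne hκt, abs_zero]
    linarith
  obtain ⟨v, ⟨hvF, hκv⟩, hreg, hvK⟩ := hK₀ t ⟨htF, hκt⟩
  have hκK : (κ v).toReal ≤ K := by
    linarith [abs_nonneg a, abs_nonneg (qf G v), le_max_left K₀ 0,
      abs_nonneg (∫ s in a..0, cpIntegrand p F G s)]
  have hbase : |a| + |qf F t| + |qf G t| + |qf G v| ≤ B := by
    linarith [ENNReal.toReal_nonneg (a := κ v), le_max_left K₀ 0,
      abs_nonneg (∫ s in a..0, cpIntegrand p F G s)]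
  have hlen : |qf F t - a| ≤ B := by
    linarith [abs_sub (qf F t) a, abs_nonneg (qf G t), le_max_right K₀ 0,
      abs_nonneg (∫ s in a..0, cpIntegrand p F G s)]
  calc |cp p F G t|
      ≤ (κ v).toReal + p * (|a| + |qf F t| + |qf G t| + |qf G v|) ^ (p - 1) * |qf F t - a| :=
        abs_cp_le_of_qfRegion_eq hp hF htF hvF hreg.symm hκv
    _ ≤ K + p * B ^ (p - 1) * B := by gcongr
    _ = K + p * B ^ p := by
        rw [mul_assoc, ← rpow_add_one' hB (by linarith), sub_add_cancel]

end Cp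

section Lp

variable {α : Type*} [MeasurableSpace α] {μ : Measure α}

theorem memLp_ofReal_of_integrable_abs_rpow {f : α → ℝ} {q : ℝ} (hq : 0 < q)
    (hf : AEStronglyMeasurable f μ) (h : Integrable (fun x => |f x| ^ q) μ) :
    MemLp f (ENNReal.ofReal q) μ :=
  (integrable_norm_rpow_iff hf (by simpa using hq) ENNReal.ofReal_ne_top).1
    (by simpa [ENNReal.toReal_ofReal hq.le] using h)

theorem MemLp.rpow_of_nonneg {f : α → ℝ} {p q : ℝ} (hp : 0 < p) (hf0 : ∀ x, 0 ≤ f x)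
    (hf : MemLp f (ENNReal.ofReal (q * p)) μ) :
    MemLp (fun x => f x ^ p) (ENNReal.ofReal q) μ := by
  have := hf.norm_rpow_div (ENNReal.ofReal p)
  rw [ENNReal.toReal_ofReal hp.le, ← ENNReal.ofReal_div_of_pos hp,
    mul_div_cancel_right₀ _ hp.ne'] at this
  simpa only [Real.norm_of_nonneg (hf0 _)] using this

end Lp

theorem stmt_5_general (p : ℝ) (hp : 1 < p) (F G : ℝ → ℝ)
    (hF : Monotone F)
    (hFmom : IntegrableOn (fun t => |qf F t| ^ (2 * p)) (Ioo 0 1))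
    (hGmom : IntegrableOn (fun t => |qf G t| ^ (2 * p)) (Ioo 0 1)) :
    MemLp (fun t => cp p F G t) 2 (volume.restrict (Ioo (0 : ℝ) 1)) := by
  obtain ⟨K, hK, hbound⟩ := exists_abs_cp_le (G := G) hp.le hF
  have hmom : ∀ H : ℝ → ℝ, IntegrableOn (fun t => |qf H t| ^ (2 * p)) (Ioo 0 1) →
      MemLp (fun t => |qf H t|) (ENNReal.ofReal (2 * p)) (volume.restrict (Ioo 0 1)) :=
    fun H h => (memLp_ofReal_of_integrable_abs_rpow (by positivity)
      (measurable_qf H).aestronglyMeasurable h).abs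
  have hB : MemLp (fun t => (|qf F t| + |qf G t| + K) ^ p) 2 (volume.restrict (Ioo 0 1)) := by
    simpa using MemLp.rpow_of_nonneg (f := fun t => |qf F t| + |qf G t| + K) (q := 2)
      (by positivity) (fun t => by positivity)
      (((hmom F hFmom).add (hmom G hGmom)).add (memLp_const K))
  refine ((memLp_const K).add (hB.const_mul p)).of_le (measurable_cp hF).aestronglyMeasurable
    (ae_of_all _ fun t => (hbound t).trans (le_abs_self _))

/-- If `F, G` are distribution functions with finite `2p`-th moments, `p > 1`, then
`t ↦ c_p(t;F,G)` belongs to `L²(0,1)`. -/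
theorem stmt_5 (p : ℝ) (hp : 1 < p) (F G : ℝ → ℝ)
    (hF : Monotone F) (hG : Monotone G)
    (hFmom : IntegrableOn (fun t => |qf F t| ^ (2 * p)) (Ioo 0 1))
    (hGmom : IntegrableOn (fun t => |qf G t| ^ (2 * p)) (Ioo 0 1)) :
    MemLp (fun t => cp p F G t) 2 (volume.restrict (Ioo (0 : ℝ) 1)) :=
  stmt_5_general p hp F G hF hFmom hGmom
end
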